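/- For every n ≥ 1 one has z_n ∈ U_{q_n}, i.e., z_n has a unique q_n-expansion. Moreover, the sequence (z_n)_{n≥1} is strictly decreasing and converges to 1 as n → ∞. -/

import Mathlib

open Filter Topology

noncomputable section

/-- The value `Σ_{i≥0} d i / q^(i+1)` of a (0-indexed) digit sequence `d` in base `q`;
this corresponds to `((d_i)_{i≥1})_q` with `d_i = d (i-1)`. -/
def seqVal (q : ℝ) (d : ℕ → ℕ) : ℝ := ∑' i : ℕ, (d i : ℝ) / q ^ (i + 1)

/-- `d` is a `q`-expansion of `x` with digits in `{0,1}`. -/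
def IsExpansion (q x : ℝ) (d : ℕ → ℕ) : Prop :=
  (∀ i, d i ≤ 1) ∧ x = seqVal q d

/-- `x` has a unique `q`-expansion. -/
def HasUniqueExpansion (q x : ℝ) : Prop := ∃! d : ℕ → ℕ, IsExpansion q x d

/-- The set `U(x)` of univoque bases of `x`. -/
def UBases (x : ℝ) : Set ℝ := {q | 1 < q ∧ q < 2 ∧ HasUniqueExpansion q x}

/-- `q_s(x) = inf U(x)`. -/
def qs (x : ℝ) : ℝ := sInf (UBases x)

/-- The univoque set `U_q` of `x ∈ [0, 1/(q-1)]` with a unique `q`-expansion. -/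
def Uset (q : ℝ) : Set ℝ :=
  {x | x ∈ Set.Icc 0 (1 / (q - 1)) ∧ HasUniqueExpansion q x}

/-- The set `U_q'` of digit sequences which are the unique `q`-expansion of their value. -/
def USeq (q : ℝ) : Set (ℕ → ℕ) :=
  {d | (∀ i, d i ≤ 1) ∧ ∀ e : ℕ → ℕ, IsExpansion q (seqVal q d) e → e = d}

/-- The Thue–Morse sequence: `τ 0 = 0`, `τ (2n) = τ n`, `τ (2n+1) = 1 - τ n`. -/
def IsThueMorse (τ : ℕ → ℕ) : Prop :=
  τ 0 = 0 ∧ (∀ n, τ (2 * n) = τ n) ∧ ∀ n, τ (2 * n + 1) = 1 - τ n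

/-- `q` is the Komornik–Loreti constant: the base in `(1,2)` with `1 = Σ_{i≥1} τ_i q^{-i}`. -/
def IsKL (τ : ℕ → ℕ) (q : ℝ) : Prop :=
  1 < q ∧ q < 2 ∧ (1 : ℝ) = ∑' i : ℕ, (τ (i + 1) : ℝ) / q ^ (i + 1)

/-- `Q` is the sequence of bases `q_n`: `Q 0 = 1` and for `n ≥ 1`, `Q n` is the root in
`(1,2)` of `1 = Σ_{i=1}^{2^n} τ_i q^{-i}`. -/
def IsBaseSeq (τ : ℕ → ℕ) (Q : ℕ → ℝ) : Prop :=
  Q 0 = 1 ∧ ∀ n, 1 ≤ n → 1 < Q n ∧ Q n < 2 ∧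
    (1 : ℝ) = ∑ i ∈ Finset.range (2 ^ n), (τ (i + 1) : ℝ) / (Q n) ^ (i + 1)

/-- `D_n = ⋃_{q ∈ (q_{n-1}, q_n]} U_q`. -/
def D (Q : ℕ → ℝ) (n : ℕ) : Set ℝ := ⋃ q ∈ Set.Ioc (Q (n - 1)) (Q n), Uset q

/-- The golden ratio. -/
def qG : ℝ := (1 + Real.sqrt 5) / 2

/-- Strict lexicographical order on digit sequences. -/
def seqLt (c d : ℕ → ℕ) : Prop := ∃ n, (∀ i, i < n → c i = d i) ∧ c n < d n

/-- The word `τ_1 ⋯ τ_m`. -/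
def tmPrefix (τ : ℕ → ℕ) (m : ℕ) : List ℕ := (List.range m).map fun i => τ (i + 1)

/-- `w⁻`: decrease the last digit of a word by 1. -/
def lastDec (w : List ℕ) : List ℕ := w.dropLast ++ [w.getLastD 0 - 1]

/-- `w⁺`: increase the last digit of a word by 1. -/
def lastInc (w : List ℕ) : List ℕ := w.dropLast ++ [w.getLastD 0 + 1]

/-- The reflection of a word. -/
def reflect (w : List ℕ) : List ℕ := w.map fun d => 1 - d

/-- The infinite sequence given by the prefix `p` followed by periodic repetition of `w`. -/
def prefPeriodic (p w : List ℕ) : ℕ → ℕ := fun j =>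
  if j < p.length then p.getD j 0 else w.getD ((j - p.length) % w.length) 0

/-- `z_n = ((τ_1⋯τ_{2^{n-1}})(τ_{2^{n-1}+1}⋯τ_{2^n})^∞)_{q_n}`. -/
def zVal (τ : ℕ → ℕ) (Q : ℕ → ℝ) (n : ℕ) : ℝ :=
  seqVal (Q n) (prefPeriodic (tmPrefix τ (2 ^ (n - 1)))
    ((List.range (2 ^ (n - 1))).map fun i => τ (2 ^ (n - 1) + (i + 1))))

/-- `z_{1,k} = Σ_{i=1}^k q_G^{-i} + 1/(q_G^k (q_G^2 - 1))`. -/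
def z1 (k : ℕ) : ℝ :=
  (∑ i ∈ Finset.range k, 1 / qG ^ (i + 1)) + 1 / (qG ^ k * (qG ^ 2 - 1))

/-!
Write `m = 2^(n-1)` and `q = q_n`. The digits of `z_n` are `d = τ₁⋯τ_m (τ_{m+1}⋯τ_{2m})^∞`, and
`1` has the quasi-greedy expansion `α = (τ₁⋯τ_{2m-1} 0)^∞` in base `q`. Because the Thue–Morse
sequence `τ₁τ₂⋯` lexicographically dominates all its proper shifts and their reflections, every
proper shift of `d` and of its reflection `1 - d` is lexicographically below `α`. By Parry's
argument all these tails then have value `< 1`, which leaves no room for a second expansion: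
at the first digit where another expansion differs from `d`, one of these tails would need value
`≥ 1`. Summing the geometric series gives `z_n = 1 + (2 - q) / ((q - 1) q^m (q^m - 1))`, and since
`q_n` increases with `n`, this is strictly decreasing and tends to `1`.
-/

def LexLE (a b : ℕ → ℕ) : Prop := ∀ k, (∀ j < k, a j = b j) → a k ≤ b k

namespace IsThueMorse

variable {τ : ℕ → ℕ}

theorem le_one (hτ : IsThueMorse τ) (j : ℕ) : τ j ≤ 1 := by
  induction j using Nat.strong_induction_on with
  | _ j ih =>
    obtain ⟨k, rfl | rfl⟩ := Nat.even_or_odd' j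
    · rcases Nat.eq_zero_or_pos k with rfl | hk
      · simp [hτ.1]
      · rw [hτ.2.1]; exact ih k (by omega)
    · rw [hτ.2.2]; omega

theorem two_mul_add_one_add (hτ : IsThueMorse τ) (n : ℕ) : τ (2 * n + 1) + τ n = 1 := by
  have := hτ.2.2 n
  have := hτ.le_one n
  omega

theorem one (hτ : IsThueMorse τ) : τ 1 = 1 := by
  simpa [hτ.1] using hτ.two_mul_add_one_add 0

theorem two_pow (hτ : IsThueMorse τ) (k : ℕ) : τ (2 ^ k) = 1 := by
  induction k with
  | zero => exact hτ.one
  | succ k ih => rw [pow_succ', hτ.2.1, ih]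

theorem two_pow_add_add (hτ : IsThueMorse τ) (k : ℕ) {i : ℕ} (hi : i < 2 ^ k) :
    τ (2 ^ k + i) + τ i = 1 := by
  induction k generalizing i with
  | zero =>
    obtain rfl : i = 0 := by omega
    simp [hτ.one, hτ.1]
  | succ k ih =>
    obtain ⟨j, rfl | rfl⟩ := Nat.even_or_odd' i
    · rw [show 2 ^ (k + 1) + 2 * j = 2 * (2 ^ k + j) by ring, hτ.2.1, hτ.2.1]
      exact ih (by rw [pow_succ] at hi; omega)
    · have := ih (i := j) (by rw [pow_succ] at hi; omega)
      rw [show 2 ^ (k + 1) + (2 * j + 1) = 2 * (2 ^ k + j) + 1 by ring]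
      have := hτ.two_mul_add_one_add (2 ^ k + j)
      have := hτ.two_mul_add_one_add j
      omega

theorem two_mul_add_two_add (hτ : IsThueMorse τ) (n : ℕ) :
    τ (2 * n + 2) + τ (2 * n + 3) = 1 := by
  rw [show 2 * n + 2 = 2 * (n + 1) by ring, show 2 * n + 3 = 2 * (n + 1) + 1 by ring,
    hτ.2.1, add_comm]
  exact hτ.two_mul_add_one_add _

/-- For `c = 1` this compares the reflection `1 - τ` of a shift with `τ`. -/
theorem lexLE_shift (hτ : IsThueMorse τ) (c : ℕ) {i : ℕ} (hi : 1 ≤ i) :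
    LexLE (fun s => (τ (i + s + 1) + c) % 2) (fun s => τ (s + 1)) := by
  induction i using Nat.strong_induction_on with
  | _ i ih =>
  intro k H
  simp only at H ⊢
  have h1 := hτ.one
  obtain ⟨i', rfl | rfl⟩ := Nat.even_or_odd' i
  · obtain ⟨r, hr | hr⟩ := Nat.even_or_odd' (k + 1)
    · have H' : ∀ j < r - 1, (τ (i' + j + 1) + c) % 2 = τ (j + 1) := fun j hj => by
        have := H (2 * j + 1) (by omega)
        rwa [show 2 * i' + (2 * j + 1) + 1 = 2 * (i' + j + 1) by ring,
          show 2 * j + 1 + 1 = 2 * (j + 1) by ring, hτ.2.1, hτ.2.1] at this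
      have := ih i' (by omega) (by omega) (r - 1) H'
      simp only at this
      rwa [show 2 * i' + k + 1 = 2 * (i' + (r - 1) + 1) by omega, hr, hτ.2.1,
        show r = r - 1 + 1 by omega, hτ.2.1]
    · have := hτ.two_mul_add_one_add (i' + r)
      have := hτ.two_mul_add_one_add r
      rw [show 2 * i' + k + 1 = 2 * (i' + r) + 1 by omega, hr]
      rcases Nat.eq_zero_or_pos r with rfl | hr0
      · simp only [mul_zero, add_zero, zero_add, h1]; omega
      have := H (2 * r - 1) (by omega)
      rw [show 2 * i' + (2 * r - 1) + 1 = 2 * (i' + r) by omega,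
        show 2 * r - 1 + 1 = 2 * r by omega, hτ.2.1, hτ.2.1] at this
      omega
  · have h2 : τ 2 = 1 := by rw [show 2 = 2 * 1 by rfl, hτ.2.1, h1]
    -- `τ (i + 1) ≠ τ (i + 2)` for odd `i`, while `τ 1 = τ 2`
    have := hτ.two_mul_add_two_add i'
    rcases k with _ | _ | k
    · change (τ (2 * i' + 2) + c) % 2 ≤ τ 1
      omega
    · have H0 : (τ (2 * i' + 2) + c) % 2 = τ 1 := H 0 (by omega)
      change (τ (2 * i' + 3) + c) % 2 ≤ τ 2
      omega
    · have H0 : (τ (2 * i' + 2) + c) % 2 = τ 1 := H 0 (by omega)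
      have H1 : (τ (2 * i' + 3) + c) % 2 = τ 2 := H 1 (by omega)
      omega

end IsThueMorse

section SeqVal

variable {q : ℝ} {d : ℕ → ℕ}

theorem summable_geometric_inv_pow_succ (hq : 1 < q) :
    Summable (fun i : ℕ => 1 / q ^ (i + 1)) := by
  have := summable_geometric_of_lt_one (by positivity) (inv_lt_one_of_one_lt₀ hq)
  simpa [pow_succ'] using this.mul_right q⁻¹

theorem tsum_inv_pow_succ (hq : 1 < q) : ∑' i : ℕ, 1 / q ^ (i + 1) = 1 / (q - 1) := by
  have hq0 : q ≠ 0 := by positivity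
  have hq1 : q - 1 ≠ 0 := sub_ne_zero.2 hq.ne'
  simp_rw [one_div, ← inv_pow, pow_succ, tsum_mul_right,
    tsum_geometric_of_lt_one (by positivity) (inv_lt_one_of_one_lt₀ hq)]
  field_simp

theorem div_pow_succ_le (hq : 0 ≤ q) (hd : ∀ i, d i ≤ 1) (i : ℕ) :
    (d i : ℝ) / q ^ (i + 1) ≤ 1 / q ^ (i + 1) := by
  gcongr
  exact_mod_cast hd i

theorem summable_seqVal (hq : 1 < q) (hd : ∀ i, d i ≤ 1) :
    Summable (fun i : ℕ => (d i : ℝ) / q ^ (i + 1)) :=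
  (summable_geometric_inv_pow_succ hq).of_nonneg_of_le (fun i => by positivity)
    (div_pow_succ_le (by linarith) hd)

theorem seqVal_nonneg (hq : 0 ≤ q) : 0 ≤ seqVal q d :=
  tsum_nonneg fun i => by positivity

theorem seqVal_le (hq : 1 < q) (hd : ∀ i, d i ≤ 1) : seqVal q d ≤ 1 / (q - 1) :=
  tsum_inv_pow_succ hq ▸ (summable_seqVal hq hd).tsum_le_tsum (div_pow_succ_le (by linarith) hd)
    (summable_geometric_inv_pow_succ hq)

theorem one_div_pow_le_seqVal (hq : 1 < q) (hd : ∀ i, d i ≤ 1) {j : ℕ} (h : d j = 1) :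
    1 / q ^ (j + 1) ≤ seqVal q d := by
  have := (summable_seqVal hq hd).le_tsum j (fun i _ => by positivity)
  rwa [h, Nat.cast_one] at this

theorem seqVal_eq_sum_add (hq : 1 < q) (hd : ∀ i, d i ≤ 1) (k : ℕ) :
    seqVal q d = ∑ j ∈ Finset.range k, (d j : ℝ) / q ^ (j + 1)
      + seqVal q (fun x => d (k + x)) / q ^ k := by
  rw [seqVal, ← (summable_seqVal hq hd).sum_add_tsum_nat_add k, seqVal, ← tsum_div_const]
  congr 1
  refine tsum_congr fun i => ?_
  rw [div_div, ← pow_add, add_comm i k]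
  ring_nf

theorem seqVal_of_periodic (hq : 1 < q) (hd : ∀ i, d i ≤ 1) {p : ℕ} (hp : 1 ≤ p)
    (hper : ∀ i, d (p + i) = d i) :
    seqVal q d = (∑ j ∈ Finset.range p, (d j : ℝ) / q ^ (j + 1)) * q ^ p / (q ^ p - 1) := by
  have hqp : 1 < q ^ p := one_lt_pow₀ hq (by omega)
  have h := seqVal_eq_sum_add hq hd p
  rw [funext hper] at h
  rw [eq_div_iff (by linarith)]
  field_simp at h
  linear_combination h

theorem seqVal_one_sub (hq : 1 < q) (hd : ∀ i, d i ≤ 1) :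
    seqVal q (fun i => 1 - d i) = 1 / (q - 1) - seqVal q d := by
  rw [seqVal, ← tsum_inv_pow_succ hq, seqVal,
    ← (summable_geometric_inv_pow_succ hq).tsum_sub (summable_seqVal hq hd)]
  refine tsum_congr fun i => ?_
  rw [Nat.cast_sub (hd i), Nat.cast_one, sub_div]

end SeqVal

theorem exists_forall_lt_eq_and_ne {a b : ℕ → ℕ} (h : a ≠ b) :
    ∃ k, (∀ j < k, a j = b j) ∧ a k ≠ b k := by
  have hex := Function.ne_iff.mp h
  exact ⟨Nat.find hex, fun j hj => not_not.1 (Nat.find_min hex hj), Nat.find_spec hex⟩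

theorem LexLE.exists_forall_lt_eq_and_lt {a b : ℕ → ℕ} (hab : LexLE a b) (h : a ≠ b) :
    ∃ k, (∀ j < k, a j = b j) ∧ a k < b k := by
  obtain ⟨k, hk, hne⟩ := exists_forall_lt_eq_and_ne h
  exact ⟨k, hk, lt_of_le_of_ne (hab k hk) hne⟩

section Parry

variable {q : ℝ} {a b α : ℕ → ℕ}

theorem seqVal_sub_seqVal_of_forall_lt_eq (hq : 1 < q) (ha : ∀ i, a i ≤ 1)
    (hb : ∀ i, b i ≤ 1) {k : ℕ} (H : ∀ j < k, a j = b j) :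
    seqVal q a - seqVal q b = ((a k : ℝ) - b k + seqVal q (fun x => a (k + 1 + x))
      - seqVal q (fun x => b (k + 1 + x))) / q ^ (k + 1) := by
  rw [seqVal_eq_sum_add hq ha (k + 1), seqVal_eq_sum_add hq hb (k + 1), Finset.sum_range_succ,
    Finset.sum_range_succ, Finset.sum_congr rfl fun j hj => by rw [H j (Finset.mem_range.1 hj)]]
  ring

theorem forall_lexLE_tail (hL : ∀ k, LexLE (fun x => a (k + x)) α) (k t : ℕ) :
    LexLE (fun x => a (k + (t + x))) α := by
  simpa only [add_assoc] using hL (k + t)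

theorem exists_seqVal_sub_one_eq (hq : 1 < q) (hα : ∀ i, α i ≤ 1) (hαv : seqVal q α = 1)
    (ha : ∀ i, a i ≤ 1) (hL : LexLE a α) (hne : a ≠ α) :
    ∃ k, seqVal q a - 1 = (seqVal q (fun x => a (k + 1 + x)) - 1
      - seqVal q (fun x => α (k + 1 + x))) / q ^ (k + 1) := by
  obtain ⟨k, hagree, hk⟩ := hL.exists_forall_lt_eq_and_lt hne
  have hak : a k = 0 := by have := hα k; omega
  have hαk : α k = 1 := by have := hα k; omega
  have hdiff := seqVal_sub_seqVal_of_forall_lt_eq hq ha hα hagree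
  rw [hak, hαk, hαv, Nat.cast_zero, Nat.cast_one, zero_sub] at hdiff
  exact ⟨k, hdiff.trans (by ring)⟩

theorem seqVal_le_one_of_forall_lexLE (hq : 1 < q) (hα : ∀ i, α i ≤ 1)
    (hαv : seqVal q α = 1) (ha : ∀ i, a i ≤ 1) (hL : ∀ k, LexLE (fun x => a (k + x)) α) :
    seqVal q a ≤ 1 := by
  -- each first difference with `α` costs a factor `1 / q` in the excess over `1`
  have key : ∀ M : ℕ, ∀ a : ℕ → ℕ, (∀ i, a i ≤ 1) →
      (∀ k, LexLE (fun x => a (k + x)) α) → seqVal q a ≤ 1 + 1 / (q - 1) / q ^ M := by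
    intro M
    induction M with
    | zero =>
      intro a ha _
      rw [pow_zero, div_one]
      linarith [seqVal_le hq ha]
    | succ M ih =>
      intro a ha hL
      obtain rfl | hne := eq_or_ne a α
      · rw [hαv]
        have : 0 ≤ 1 / (q - 1) / q ^ (M + 1) := by positivity
        linarith
      obtain ⟨k, hk⟩ := exists_seqVal_sub_one_eq hq hα hαv ha (by simpa using hL 0) hne
      have hVa := ih _ (fun i => ha _) (forall_lexLE_tail hL (k + 1))
      have hVα := seqVal_nonneg (q := q) (d := fun x => α (k + 1 + x)) (by linarith)
      have hstep : seqVal q a - 1 ≤ 1 / (q - 1) / q ^ M / q ^ (k + 1) := by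
        rw [hk]
        gcongr
        linarith
      have hpow : q ^ (M + 1) ≤ q ^ (k + 1 + M) := pow_le_pow_right₀ hq.le (by omega)
      calc seqVal q a ≤ 1 + 1 / (q - 1) / q ^ (k + 1 + M) := by
            rw [pow_add, mul_comm, ← div_div]
            linarith
        _ ≤ 1 + 1 / (q - 1) / q ^ (M + 1) := by gcongr
  have hlim : Tendsto (fun M : ℕ => 1 + 1 / (q - 1) / q ^ M) atTop (𝓝 1) := by
    simpa using ((tendsto_const_nhds (x := 1 / (q - 1))).div_atTop
      (tendsto_pow_atTop_atTop_of_one_lt hq)).const_add 1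
  exact ge_of_tendsto' hlim fun M => key M a ha hL

theorem seqVal_lt_one_of_forall_lexLE (hq : 1 < q) (hα : ∀ i, α i ≤ 1)
    (hαv : seqVal q α = 1) (hα1 : ∀ k, ∃ j, α (k + j) = 1) (ha : ∀ i, a i ≤ 1)
    (hL : ∀ k, LexLE (fun x => a (k + x)) α) (hne : a ≠ α) : seqVal q a < 1 := by
  obtain ⟨k, hk⟩ := exists_seqVal_sub_one_eq hq hα hαv ha (by simpa using hL 0) hne
  have hVa :=
    seqVal_le_one_of_forall_lexLE hq hα hαv (fun i => ha _) (forall_lexLE_tail hL (k + 1))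
  obtain ⟨j, hj⟩ := hα1 (k + 1)
  have hVα := one_div_pow_le_seqVal hq (fun i => hα (k + 1 + i)) hj
  have : 0 < 1 / q ^ (j + 1) := by positivity
  have : seqVal q a - 1 < 0 := by
    rw [hk]
    exact div_neg_of_neg_of_pos (by linarith) (by positivity)
  linarith

end Parry

section Unique

variable {q : ℝ} {d : ℕ → ℕ}

theorem mem_USeq_of_tail_lt_one (hq : 1 < q) (hd : ∀ i, d i ≤ 1)
    (h0 : ∀ j, d j = 0 → seqVal q (fun x => d (j + 1 + x)) < 1)
    (h1 : ∀ j, d j = 1 → seqVal q (fun x => 1 - d (j + 1 + x)) < 1) : d ∈ USeq q := by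
  refine ⟨hd, fun e ⟨he, hval⟩ => by_contra fun hne => ?_⟩
  obtain ⟨J, hagree, hJ⟩ := exists_forall_lt_eq_and_ne hne
  have hdiff := seqVal_sub_seqVal_of_forall_lt_eq hq he hd hagree
  rw [← hval, sub_self, eq_comm, div_eq_zero_iff, or_iff_left (by positivity)] at hdiff
  have hVe := seqVal_le hq fun i => he (J + 1 + i)
  have hVe0 := seqVal_nonneg (q := q) (d := fun x => e (J + 1 + x)) (by linarith)
  have hVd0 := seqVal_nonneg (q := q) (d := fun x => d (J + 1 + x)) (by linarith)
  rcases (by have := he J; have := hd J; omega : e J = 1 ∧ d J = 0 ∨ e J = 0 ∧ d J = 1) with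
    ⟨he1, hd0⟩ | ⟨he0, hd1⟩
  · have := h0 J hd0
    rw [he1, hd0, Nat.cast_zero, Nat.cast_one] at hdiff
    linarith
  · have := h1 J hd1
    rw [seqVal_one_sub hq fun i => hd _] at this
    rw [he0, hd1, Nat.cast_zero, Nat.cast_one] at hdiff
    linarith

theorem seqVal_mem_Uset (hq : 1 < q) (hd : d ∈ USeq q) : seqVal q d ∈ Uset q :=
  ⟨⟨seqVal_nonneg (by linarith), seqVal_le hq hd.1⟩, d, ⟨hd.1, rfl⟩, hd.2⟩

end Unique

/-- The digit sequence `τ₁⋯τ_m (τ_{m+1}⋯τ_{2m})^∞` of `z_n`, where `m = 2^(n-1)`. -/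
def zDigits (τ : ℕ → ℕ) (m : ℕ) : ℕ → ℕ := fun j =>
  if j < m then τ (j + 1) else τ (m + (j - m) % m + 1)

/-- The quasi-greedy expansion `(τ₁⋯τ_{2m-1} 0)^∞` of `1` in base `q_n`, `m = 2^(n-1)`. -/
def quasiGreedy (τ : ℕ → ℕ) (m : ℕ) : ℕ → ℕ := fun k =>
  if k % (2 * m) = 2 * m - 1 then 0 else τ (k % (2 * m) + 1)

theorem prefPeriodic_eq_zDigits (τ : ℕ → ℕ) {m : ℕ} (hm : 1 ≤ m) :
    prefPeriodic (tmPrefix τ m) ((List.range m).map fun i => τ (m + (i + 1))) = zDigits τ m := by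
  funext j
  simp only [prefPeriodic, zDigits, tmPrefix, List.length_map, List.length_range,
    List.getD_eq_getElem?_getD, List.getElem?_map]
  split_ifs with hj
  · simp [List.getElem?_range hj]
  · simp [List.getElem?_range (Nat.mod_lt _ hm), add_assoc]

section Digits

variable {τ : ℕ → ℕ} {m e : ℕ}

theorem zDigits_le_one (hτ : IsThueMorse τ) (j : ℕ) : zDigits τ m j ≤ 1 := by
  unfold zDigits
  split <;> exact hτ.le_one _

theorem quasiGreedy_le_one (hτ : IsThueMorse τ) (k : ℕ) : quasiGreedy τ m k ≤ 1 := by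
  unfold quasiGreedy
  split
  · omega
  · exact hτ.le_one _

theorem zDigits_of_lt {j : ℕ} (hj : j < 2 * m) : zDigits τ m j = τ (j + 1) := by
  unfold zDigits
  split_ifs with h
  · rfl
  · rw [Nat.mod_eq_of_lt (by omega)]
    congr 1
    omega

theorem zDigits_add_period {y : ℕ} (hy : m ≤ y) : zDigits τ m (y + m) = zDigits τ m y := by
  unfold zDigits
  rw [if_neg (by omega), if_neg (by omega), show y + m - m = y - m + m by omega, Nat.add_mod_right]

theorem quasiGreedy_add_period (k : ℕ) : quasiGreedy τ m (2 * m + k) = quasiGreedy τ m k := by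
  unfold quasiGreedy
  rw [Nat.add_mod_left]

theorem quasiGreedy_of_lt {k : ℕ} (hk : k < 2 * m - 1) : quasiGreedy τ m k = τ (k + 1) := by
  unfold quasiGreedy
  rw [Nat.mod_eq_of_lt (by omega), if_neg (by omega)]

theorem quasiGreedy_two_mul_sub_one (hm : 1 ≤ m) : quasiGreedy τ m (2 * m - 1) = 0 := by
  unfold quasiGreedy
  rw [Nat.mod_eq_of_lt (by omega), if_pos rfl]

theorem exists_quasiGreedy_add_eq_one (hτ : IsThueMorse τ) (hm : 2 ≤ m) (k : ℕ) :
    ∃ j, quasiGreedy τ m (k + j) = 1 := by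
  refine ⟨2 * m * (k + 1) - k, ?_⟩
  have : k ≤ 2 * m * (k + 1) := by nlinarith
  unfold quasiGreedy
  rw [Nat.add_sub_cancel' this, Nat.mul_mod_right, if_neg (by omega), hτ.one]

theorem apply_add_eq_of_eventually_periodic {u : ℕ → ℕ}
    (hu : ∀ y, m ≤ y → u (y + m) = u y) {i : ℕ} (hi : m ≤ i) (x : ℕ) :
    u (i + x) = u (m + (i - m) % m + x) := by
  have hmul : ∀ t y, m ≤ y → u (y + t * m) = u y := by
    intro t y hy
    induction t with
    | zero => simp
    | succ t ih => rw [add_mul, one_mul, ← add_assoc, hu _ (by nlinarith), ih]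
  rw [← hmul ((i - m) / m) (m + (i - m) % m + x) (by omega)]
  congr 1
  have := Nat.mod_add_div (i - m) m
  rw [mul_comm] at this
  generalize (i - m) % m = r, (i - m) / m * m = s at *
  omega

end Digits

section PowerOfTwo

variable {τ : ℕ → ℕ} {m e : ℕ}

theorem IsThueMorse.eq_one_of_eq_two_pow (hτ : IsThueMorse τ) (hm : m = 2 ^ e) : τ m = 1 :=
  hm ▸ hτ.two_pow e

theorem IsThueMorse.two_mul_eq_one_of_eq_two_pow (hτ : IsThueMorse τ) (hm : m = 2 ^ e) :
    τ (2 * m) = 1 :=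
  hm ▸ pow_succ' 2 e ▸ hτ.two_pow (e + 1)

theorem IsThueMorse.add_add_of_eq_two_pow (hτ : IsThueMorse τ) (hm : m = 2 ^ e) {s : ℕ}
    (hs : s < m) : τ (m + s) + τ s = 1 :=
  hm ▸ hτ.two_pow_add_add e (hm ▸ hs)

theorem IsThueMorse.two_mul_add_add_of_eq_two_pow (hτ : IsThueMorse τ) (hm : m = 2 ^ e) {s : ℕ}
    (hs : s < 2 * m) : τ (2 * m + s) + τ s = 1 :=
  hτ.add_add_of_eq_two_pow (e := e + 1) (by rw [hm, pow_succ']) hs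

theorem zDigits_eq_tau (hτ : IsThueMorse τ) (hm : m = 2 ^ e) {x : ℕ} (hx : x ≤ 3 * m - 2) :
    zDigits τ m x = τ (x + 1) := by
  rcases lt_or_ge x (2 * m) with h | h
  · exact zDigits_of_lt h
  have hm1 : 1 ≤ m := hm ▸ Nat.one_le_two_pow
  -- past `2m` the period `τ_{m+1}⋯τ_{2m}` is still read as Thue–Morse, up to `τ_{3m-1}`
  have c1 := hτ.add_add_of_eq_two_pow hm (s := x - 2 * m + 1) (by omega)
  have c2 := hτ.two_mul_add_add_of_eq_two_pow hm (s := x - 2 * m + 1) (by omega)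
  rw [show x = x - m + m by omega, zDigits_add_period (by omega), zDigits_of_lt (by omega),
    show x - m + 1 = m + (x - 2 * m + 1) by omega,
    show x - m + m + 1 = 2 * m + (x - 2 * m + 1) by omega]
  omega

theorem two_le_of_eq_pow (hm : m = 2 ^ e) (he : 1 ≤ e) : 2 ≤ m := by
  simpa [hm] using Nat.pow_le_pow_right two_pos he

theorem commonPrefix_quasiGreedy_lt (hτ : IsThueMorse τ) (hm : m = 2 ^ e) (he : 1 ≤ e)
    {u : ℕ → ℕ} (hu : ∀ y, m ≤ y → u (y + m) = u y) {i k : ℕ} (hi : 1 ≤ i)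
    (H : ∀ j < k, u (i + j) = quasiGreedy τ m j) : k < 2 * m ∧ (m ≤ i → k ≤ m) := by
  have hm2 := two_le_of_eq_pow hm he
  have hτm : τ m = 1 := hτ.eq_one_of_eq_two_pow hm
  constructor
  · by_contra hk
    have h1 := H (m - 1) (by omega)
    have h2 := H (2 * m - 1) (by omega)
    rw [quasiGreedy_of_lt (by omega), Nat.sub_add_cancel (by omega), hτm] at h1
    rw [quasiGreedy_two_mul_sub_one (by omega), show i + (2 * m - 1) = i + (m - 1) + m by omega,
      hu _ (by omega)] at h2
    omega
  · intro him
    by_contra hk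
    have h1 := H 0 (by omega)
    have h2 := H m (by omega)
    have hc := hτ.add_add_of_eq_two_pow hm (s := 1) (by omega)
    rw [quasiGreedy_of_lt (by omega), add_zero, zero_add, hτ.one] at h1
    rw [quasiGreedy_of_lt (by omega), hu i him, h1] at h2
    have := hτ.one
    omega

/-- For `c = 1` this compares the reflection `1 - zDigits τ m` of a shift with
`quasiGreedy τ m`. -/
theorem lexLE_zDigits_shift (hτ : IsThueMorse τ) (hm : m = 2 ^ e) (he : 1 ≤ e) (c : ℕ)
    {i : ℕ} (hi : 1 ≤ i) :
    LexLE (fun x => (zDigits τ m (i + x) + c) % 2) (quasiGreedy τ m) := by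
  have hm2 := two_le_of_eq_pow hm he
  set u : ℕ → ℕ := fun y => (zDigits τ m y + c) % 2
  have hu : ∀ y, m ≤ y → u (y + m) = u y := fun y hy => by
    simp only [u, zDigits_add_period hy]
  wlog hi2 : i < 2 * m generalizing i
  · have := this (i := m + (i - m) % m) (by omega)
      (by have := Nat.mod_lt (i - m) (by omega : 0 < m); omega)
    show LexLE (fun x => u (i + x)) _
    simp_rw [apply_add_eq_of_eventually_periodic hu (show m ≤ i by omega)]
    exact this
  intro k H
  obtain ⟨hk, hkm⟩ := commonPrefix_quasiGreedy_lt hτ hm he hu hi H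
  by_cases hw : i + k ≤ 3 * m - 2 ∧ k < 2 * m - 1
  · have := hτ.lexLE_shift c hi k fun j hj => by
      have := H j hj
      simp only at this ⊢
      rwa [zDigits_eq_tau hτ hm (by omega), quasiGreedy_of_lt (by omega)] at this
    simp only at this ⊢
    rwa [zDigits_eq_tau hτ hm (by omega), quasiGreedy_of_lt (by omega)]
  -- the two windows that reach past `τ_{3m-1}`
  exfalso
  simp only at H
  have hτm : τ m = 1 := hτ.eq_one_of_eq_two_pow hm
  have hτ2m : τ (2 * m) = 1 := hτ.two_mul_eq_one_of_eq_two_pow hm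
  rcases lt_or_ge i m with him | him
  · have h1 := H (m - i - 1) (by omega)
    have h2 := H (2 * m - i - 1) (by omega)
    rw [zDigits_of_lt (by omega), quasiGreedy_of_lt (by omega),
      show i + (m - i - 1) + 1 = m by omega, hτm] at h1
    rw [zDigits_of_lt (by omega), quasiGreedy_of_lt (by omega),
      show i + (2 * m - i - 1) + 1 = 2 * m by omega, hτ2m] at h2
    have hc := hτ.add_add_of_eq_two_pow hm (s := m - i) (by omega)
    rw [show m - i - 1 + 1 = m - i by omega] at h1
    rw [show 2 * m - i - 1 + 1 = m + (m - i) by omega] at h2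
    omega
  · have h1 := H 0 (by omega)
    have h2 := H 1 (by omega)
    rw [zDigits_of_lt (by omega), quasiGreedy_of_lt (by omega), show i + 0 + 1 = 2 * m by omega,
      hτ2m] at h1
    rw [zDigits_eq_tau hτ hm (by omega), quasiGreedy_of_lt (by omega),
      show i + 1 + 1 = 2 * m + 1 by omega] at h2
    have hc := hτ.two_mul_add_add_of_eq_two_pow hm (s := 1) (by omega)
    have h1' : τ 1 = 1 := hτ.one
    have h2' : τ 2 = 1 := hτ.2.1 1 ▸ hτ.one
    simp only [zero_add, Nat.reduceAdd] at h1 h2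
    omega

end PowerOfTwo

theorem sum_range_one_div_pow_succ {q : ℝ} (hq : 1 < q) (n : ℕ) :
    ∑ j ∈ Finset.range n, 1 / q ^ (j + 1) = (1 - 1 / q ^ n) / (q - 1) := by
  have : q - 1 ≠ 0 := by linarith
  induction n with
  | zero => simp
  | succ n ih =>
    rw [Finset.sum_range_succ, ih]
    field_simp
    ring

/-- `z_n - 1` in terms of `q = q_n` and `m = 2^(n-1)`. -/
def zExcess (q : ℝ) (m : ℕ) : ℝ := (2 - q) / ((q - 1) * q ^ m * (q ^ m - 1))

section Value

variable {τ : ℕ → ℕ} {m e : ℕ} {q : ℝ}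

theorem seqVal_quasiGreedy (hτ : IsThueMorse τ) (hm : m = 2 ^ e) (hq : 1 < q)
    (heq : 1 = ∑ i ∈ Finset.range (2 * m), (τ (i + 1) : ℝ) / q ^ (i + 1)) :
    seqVal q (quasiGreedy τ m) = 1 := by
  have hm1 : 1 ≤ m := hm ▸ Nat.one_le_two_pow
  have hτ2m : τ (2 * m) = 1 := hτ.two_mul_eq_one_of_eq_two_pow hm
  have hpow : 1 < q ^ (2 * m) := one_lt_pow₀ hq (by omega)
  have hsum : ∑ j ∈ Finset.range (2 * m), (quasiGreedy τ m j : ℝ) / q ^ (j + 1)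
      = 1 - 1 / q ^ (2 * m) := by
    refine eq_sub_iff_add_eq.2 (Eq.trans ?_ heq.symm)
    rw [show 2 * m = 2 * m - 1 + 1 by omega, Finset.sum_range_succ, Finset.sum_range_succ,
      quasiGreedy_two_mul_sub_one hm1, Nat.sub_add_cancel (by omega), hτ2m,
      Finset.sum_congr rfl fun j hj => by rw [quasiGreedy_of_lt (Finset.mem_range.1 hj)]]
    simp
  rw [seqVal_of_periodic hq (quasiGreedy_le_one hτ) (by omega) quasiGreedy_add_period,
    hsum]
  field_simp
  exact div_self (by linarith)

theorem sum_zDigits_add_sum_zDigits (hτ : IsThueMorse τ) (hm : m = 2 ^ e) :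
    ∑ j ∈ Finset.range m, (zDigits τ m j : ℝ) / q ^ (j + 1)
      + ∑ j ∈ Finset.range m, (zDigits τ m (m + j) : ℝ) / q ^ (j + 1)
      = ∑ j ∈ Finset.range m, 1 / q ^ (j + 1) + 1 / q ^ m := by
  have hτm : τ m = 1 := hτ.eq_one_of_eq_two_pow hm
  have hτ2m : τ (2 * m) = 1 := hτ.two_mul_eq_one_of_eq_two_pow hm
  have hm1 : 1 ≤ m := hm ▸ Nat.one_le_two_pow
  obtain ⟨m', rfl⟩ : ∃ m', m = m' + 1 := ⟨m - 1, by omega⟩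
  rw [← Finset.sum_add_distrib, Finset.sum_range_succ, Finset.sum_range_succ,
    zDigits_of_lt (by omega), zDigits_of_lt (by omega), hτm,
    show m' + 1 + m' + 1 = 2 * (m' + 1) by ring, hτ2m,
    Finset.sum_congr rfl fun j hj => ?_]
  · push_cast
    ring
  · have hj := Finset.mem_range.1 hj
    have hc := hτ.add_add_of_eq_two_pow hm (s := j + 1) (by omega)
    rw [zDigits_of_lt (by omega), zDigits_of_lt (by omega), ← add_div,
      show m' + 1 + j + 1 = m' + 1 + (j + 1) by ring, add_comm, ← Nat.cast_add, hc, Nat.cast_one]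

theorem seqVal_zDigits (hτ : IsThueMorse τ) (hm : m = 2 ^ e) (hq : 1 < q)
    (heq : 1 = ∑ i ∈ Finset.range (2 * m), (τ (i + 1) : ℝ) / q ^ (i + 1)) :
    seqVal q (zDigits τ m) = 1 + zExcess q m := by
  have hm1 : 1 ≤ m := hm ▸ Nat.one_le_two_pow
  have hPW := sum_zDigits_add_sum_zDigits (q := q) hτ hm
  rw [sum_range_one_div_pow_succ hq] at hPW
  rw [seqVal_eq_sum_add hq (zDigits_le_one hτ) m, zExcess,
    seqVal_of_periodic hq (fun _ => zDigits_le_one hτ _) hm1 fun i => by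
      rw [show m + (m + i) = m + i + m by ring, zDigits_add_period (by omega)]]
  rw [two_mul, Finset.sum_range_add] at heq
  set P := ∑ j ∈ Finset.range m, (zDigits τ m j : ℝ) / q ^ (j + 1)
  set W := ∑ j ∈ Finset.range m, (zDigits τ m (m + j) : ℝ) / q ^ (j + 1)
  have hone : 1 = P + W / q ^ m := by
    rw [heq, Finset.sum_div]
    congr 1
    · exact Finset.sum_congr rfl fun j hj => by
        rw [zDigits_of_lt (by have := Finset.mem_range.1 hj; omega)]
    · refine Finset.sum_congr rfl fun j hj => ?_
      rw [zDigits_of_lt (by have := Finset.mem_range.1 hj; omega), div_div, ← pow_add]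
      ring_nf
  have hu : 1 < q ^ m := one_lt_pow₀ hq (by omega)
  have : q - 1 ≠ 0 := by linarith
  have : q ^ m - 1 ≠ 0 := by linarith
  have hW : W = (2 - q) / (q - 1) := by
    field_simp at hone hPW ⊢
    apply mul_left_cancel₀ (sub_ne_zero.2 hu.ne')
    linear_combination (q - 1) * hone + hPW
  rw [show P = 1 - W / q ^ m by linarith, hW]
  field_simp
  ring

end Value

theorem zDigits_mem_USeq {τ : ℕ → ℕ} {m e : ℕ} {q : ℝ} (hτ : IsThueMorse τ)
    (hm : m = 2 ^ e) (hq : 1 < q)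
    (heq : 1 = ∑ i ∈ Finset.range (2 * m), (τ (i + 1) : ℝ) / q ^ (i + 1)) :
    zDigits τ m ∈ USeq q := by
  have hd := zDigits_le_one (m := m) hτ
  rcases Nat.eq_zero_or_pos e with rfl | he
  · -- `m = 1`: the digits are all `1`, so every reflected tail is `0^∞`
    have h1 : ∀ j, zDigits τ m j = 1 := fun j => by
      rw [zDigits, hm, pow_zero]
      split_ifs with hj
      · rw [show j = 0 by omega]; exact hτ.one
      · rw [Nat.mod_one]; simpa [hτ.one] using hτ.2.1 1
    refine mem_USeq_of_tail_lt_one hq hd (fun j hj => by simp [h1] at hj) fun j _ => ?_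
    simp [h1, seqVal]
  have hα := seqVal_quasiGreedy hτ hm hq heq
  have hα1 := exists_quasiGreedy_add_eq_one hτ (two_le_of_eq_pow hm he)
  have key : ∀ c, ∀ i ≥ 1, seqVal q (fun x => (zDigits τ m (i + x) + c) % 2) < 1 := by
    intro c i hi
    refine seqVal_lt_one_of_forall_lexLE hq (quasiGreedy_le_one hτ) hα hα1
      (fun _ => Nat.le_of_lt_succ (Nat.mod_lt _ two_pos)) (fun k => ?_) fun h => ?_
    · simpa only [add_assoc] using lexLE_zDigits_shift hτ hm he c (i := i + k) (by omega)
    · have hu : ∀ y, m ≤ y → (zDigits τ m (y + m) + c) % 2 = (zDigits τ m y + c) % 2 :=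
        fun y hy => by rw [zDigits_add_period hy]
      exact (commonPrefix_quasiGreedy_lt hτ hm he (u := fun y => (zDigits τ m y + c) % 2) hu
        (k := 2 * m) hi fun j _ => congrFun h j).1.false
  refine mem_USeq_of_tail_lt_one hq hd (fun j _ => ?_) fun j _ => ?_
  · convert key 0 (j + 1) (by omega) using 3 with x
    have := hd (j + 1 + x)
    omega
  · convert key 1 (j + 1) (by omega) using 3 with x
    have := hd (j + 1 + x)
    omega

theorem zExcess_nonneg {q : ℝ} (hq1 : 1 ≤ q) (hq2 : q ≤ 2) (m : ℕ) : 0 ≤ zExcess q m := by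
  have : 1 ≤ q ^ m := one_le_pow₀ hq1
  unfold zExcess
  exact div_nonneg (by linarith) (mul_nonneg (mul_nonneg (by linarith) (by positivity))
    (by linarith))

theorem zExcess_lt_zExcess {x y : ℝ} (hx : 1 < x) (hxy : x < y) (hy : y < 2) {M M' : ℕ}
    (hM : 1 ≤ M) (hMM' : M ≤ M') : zExcess y M' < zExcess x M := by
  have hxM : 1 < x ^ M := one_lt_pow₀ hx (by omega)
  have hyM : x ^ M < y ^ M' :=
    (pow_lt_pow_left₀ hxy (by linarith) (by omega)).trans_le
      (pow_le_pow_right₀ (by linarith) hMM')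
  unfold zExcess
  calc (2 - y) / ((y - 1) * y ^ M' * (y ^ M' - 1))
      < (2 - x) / ((y - 1) * y ^ M' * (y ^ M' - 1)) := by
        gcongr
        exact mul_pos (mul_pos (by linarith) (pow_pos (by linarith) _)) (by linarith)
    _ < (2 - x) / ((x - 1) * x ^ M * (x ^ M - 1)) := by
        gcongr
        linarith

theorem tendsto_zExcess_atTop {q : ℝ} (hq : 1 < q) :
    Tendsto (fun M : ℕ => zExcess q M) atTop (𝓝 0) := by
  have hpow := tendsto_pow_atTop_atTop_of_one_lt hq
  exact tendsto_const_nhds.div_atTop <| ((hpow.const_mul_atTop (by linarith)).atTop_mul_atTop₀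
    (tendsto_atTop_add_const_right _ (-1) hpow))

theorem tendsto_zExcess_two_pow {Q : ℕ → ℝ} (hQ1 : 1 < Q 0) (hQ2 : ∀ n, Q n < 2)
    (hQ : Monotone Q) : Tendsto (fun n => zExcess (Q n) (2 ^ n)) atTop (𝓝 0) := by
  refine tendsto_of_tendsto_of_tendsto_of_le_of_le tendsto_const_nhds
    ((tendsto_zExcess_atTop hQ1).comp (tendsto_pow_atTop_atTop_of_one_lt one_lt_two))
    (fun n => zExcess_nonneg (hQ1.trans_le (hQ n.zero_le)).le (hQ2 n).le _) fun n => ?_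
  rcases (hQ n.zero_le).eq_or_lt with h | h
  · simp [h]
  · exact (zExcess_lt_zExcess hQ1 h (hQ2 n) Nat.one_le_two_pow le_rfl).le

namespace IsBaseSeq

variable {τ : ℕ → ℕ} {Q : ℕ → ℝ}

theorem spec_succ (hQ : IsBaseSeq τ Q) (n : ℕ) : 1 < Q (n + 1) ∧ Q (n + 1) < 2 ∧
    1 = ∑ i ∈ Finset.range (2 * 2 ^ n), (τ (i + 1) : ℝ) / Q (n + 1) ^ (i + 1) := by
  simpa only [pow_succ'] using hQ.2 (n + 1) (by omega)

theorem lt_succ (hτ : IsThueMorse τ) (hQ : IsBaseSeq τ Q) {n : ℕ}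
    (hn : 1 ≤ n) : Q n < Q (n + 1) := by
  by_contra! h
  obtain ⟨hQn, -, hn1⟩ := hQ.2 n hn
  obtain ⟨hQn', -, hn2⟩ := hQ.2 (n + 1) (by omega)
  have hpow : 2 ^ n < 2 ^ (n + 1) := Nat.pow_lt_pow_right one_lt_two n.lt_succ_self
  -- the extra term `τ_{2^(n+1)} / q^(2^(n+1)) = 1 / q^(2^(n+1))` is positive
  have hlt : ∑ i ∈ Finset.range (2 ^ n), (τ (i + 1) : ℝ) / Q n ^ (i + 1)
      < ∑ i ∈ Finset.range (2 ^ (n + 1)), (τ (i + 1) : ℝ) / Q n ^ (i + 1) := by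
    refine Finset.sum_lt_sum_of_subset (Finset.range_subset_range.2 hpow.le)
      (i := 2 ^ (n + 1) - 1) (by simp) (by simp; omega) ?_ fun _ _ _ => by positivity
    rw [Nat.sub_add_cancel Nat.one_le_two_pow, hτ.two_pow, Nat.cast_one]
    positivity
  have hle : ∑ i ∈ Finset.range (2 ^ (n + 1)), (τ (i + 1) : ℝ) / Q n ^ (i + 1)
      ≤ ∑ i ∈ Finset.range (2 ^ (n + 1)), (τ (i + 1) : ℝ) / Q (n + 1) ^ (i + 1) :=
    Finset.sum_le_sum fun i _ => by gcongr
  linarith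

end IsBaseSeq

theorem zVal_succ (τ : ℕ → ℕ) (Q : ℕ → ℝ) (n : ℕ) :
    zVal τ Q (n + 1) = seqVal (Q (n + 1)) (zDigits τ (2 ^ n)) := by
  rw [zVal, Nat.add_sub_cancel, prefPeriodic_eq_zDigits τ Nat.one_le_two_pow]

/-- `z_n ∈ U_{q_n}` for all `n ≥ 1`, and `(z_n)_{n≥1}` strictly decreases
to `1`. -/
theorem zVal_mem_strictAnti_tendsto (τ : ℕ → ℕ) (hτ : IsThueMorse τ)
    (Q : ℕ → ℝ) (hQ : IsBaseSeq τ Q) :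
    (∀ n, 1 ≤ n → zVal τ Q n ∈ Uset (Q n)) ∧
      StrictAnti (fun n => zVal τ Q (n + 1)) ∧
      Tendsto (fun n => zVal τ Q (n + 1)) atTop (nhds 1) := by
  have hQ' := hQ.spec_succ
  have hz : ∀ n, zVal τ Q (n + 1) = 1 + zExcess (Q (n + 1)) (2 ^ n) := fun n =>
    (zVal_succ τ Q n).trans (seqVal_zDigits hτ rfl (hQ' n).1 (hQ' n).2.2)
  have hmono : StrictMono fun n => Q (n + 1) :=
    strictMono_nat_of_lt_succ fun n => hQ.lt_succ hτ (by omega)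
  refine ⟨fun n hn => ?_, strictAnti_nat_of_succ_lt fun n => ?_, ?_⟩
  · obtain ⟨n, rfl⟩ : ∃ k, n = k + 1 := ⟨n - 1, by omega⟩
    rw [zVal_succ]
    exact seqVal_mem_Uset (hQ' n).1 (zDigits_mem_USeq hτ rfl (hQ' n).1 (hQ' n).2.2)
  · rw [hz, hz]
    gcongr 1 + ?_
    exact zExcess_lt_zExcess (hQ' n).1 (hmono n.lt_succ_self) (hQ' (n + 1)).2.1
      Nat.one_le_two_pow (Nat.pow_le_pow_right two_pos n.le_succ)
  · simpa [hz] using (tendsto_zExcess_two_pow (hQ' 0).1 (fun n => (hQ' n).2.1)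
      hmono.monotone).const_add 1
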